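/- arXiv:1301.1404 — 8 statements merged into one kernel-verified Lean document; each statement's English description precedes it below -/
import Mathlib

section
/- Given two short exact sequences of groups 0 → A₀ → B₀ → G₀ → 0 and 0 → A → B → G → 0, with homomorphisms α : A₀ → A surjective, β : B₀ → B, γ : G₀ → G injective with normal image, making the diagram commute, and with the image of A₀ contained in the center of B₀, let Π₀ = G/γ(G₀), E₀ = B₀/ker(α), σ : G → Π₀ the natural projection, and p : B → G the projection of the second sequence. Then the sequence B₀ → B → Π₀ → 1 (with maps β and σ∘p) is exact, i.e., the image of β equals the kernel of σ∘p and σ∘p is surjective. -/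
namespace MonoidHom

variable {A₀ B₀ G₀ A B G : Type*} [Group A₀] [Group B₀] [Group G₀] [Group A] [Group B] [Group G]

theorem ker_le_range_of_comp_eq {j₀ : A₀ →* B₀} {j : A →* B} {p : B →* G} {α : A₀ →* A}
    {β : B₀ →* B} (hex : j.range = p.ker) (hα : Function.Surjective α)
    (hβj : β.comp j₀ = j.comp α) : p.ker ≤ β.range := by
  have hjα : (j.comp α).range = j.range := by
    rw [range_comp, range_eq_top_of_surjective α hα, ← range_eq_map]
  rw [← hex, ← hjα, ← hβj, range_comp]
  exact Subgroup.map_le_range β _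

theorem map_range_eq_range_of_comp_eq {p : B →* G} {β : B₀ →* B} {p₀ : B₀ →* G₀}
    {γ : G₀ →* G} (hp₀ : Function.Surjective p₀) (hpβ : p.comp β = γ.comp p₀) :
    β.range.map p = γ.range := by
  rw [← range_comp, hpβ, range_comp, range_eq_top_of_surjective p₀ hp₀, ← range_eq_map]

theorem ker_mk'_comp_eq_range {p : B →* G} {β : B₀ →* B} {H : Subgroup G} [H.Normal]
    (hker : p.ker ≤ β.range) (hmap : β.range.map p = H) :
    ((QuotientGroup.mk' H).comp p).ker = β.range := by
  rw [← comap_ker, QuotientGroup.ker_mk', ← hmap, Subgroup.comap_map_eq, sup_of_le_left hker]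

end MonoidHom

theorem stmt0_general {A₀ B₀ G₀ A B G : Type*} [Group A₀] [Group B₀] [Group G₀]
    [Group A] [Group B] [Group G]
    (j₀ : A₀ →* B₀) (p₀ : B₀ →* G₀) (j : A →* B) (p : B →* G)
    (α : A₀ →* A) (β : B₀ →* B) (γ : G₀ →* G)
    (hp₀ : Function.Surjective p₀)
    (hp : Function.Surjective p)
    (hex : j.range = p.ker)
    (hα : Function.Surjective α)
    [hN : γ.range.Normal]
    (hβj : β.comp j₀ = j.comp α) (hpβ : p.comp β = γ.comp p₀) :
    ((QuotientGroup.mk' γ.range).comp p).ker = β.range ∧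
      Function.Surjective ((QuotientGroup.mk' γ.range).comp p) :=
  ⟨MonoidHom.ker_mk'_comp_eq_range (MonoidHom.ker_le_range_of_comp_eq hex hα hβj)
      (MonoidHom.map_range_eq_range_of_comp_eq hp₀ hpβ),
    (QuotientGroup.mk'_surjective _).comp hp⟩

/-- For an (α,γ)-prolongation diagram, the sequence
`B₀ →^β B →^{σ∘p} Π₀ → 1` is exact: `im β = ker (σ∘p)` and `σ∘p` is surjective. -/
theorem stmt0 {A₀ B₀ G₀ A B G : Type*} [Group A₀] [Group B₀] [Group G₀]
    [Group A] [Group B] [Group G]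
    (j₀ : A₀ →* B₀) (p₀ : B₀ →* G₀) (j : A →* B) (p : B →* G)
    (α : A₀ →* A) (β : B₀ →* B) (γ : G₀ →* G)
    (hj₀ : Function.Injective j₀) (hp₀ : Function.Surjective p₀)
    (hex₀ : j₀.range = p₀.ker)
    (hj : Function.Injective j) (hp : Function.Surjective p)
    (hex : j.range = p.ker)
    (hα : Function.Surjective α) (hγ : Function.Injective γ)
    [hN : γ.range.Normal]
    (hβj : β.comp j₀ = j.comp α) (hpβ : p.comp β = γ.comp p₀)
    (hcent : j₀.range ≤ Subgroup.center B₀) :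
    ((QuotientGroup.mk' γ.range).comp p).ker = β.range ∧
      Function.Surjective ((QuotientGroup.mk' γ.range).comp p) :=
  stmt0_general j₀ p₀ j p α β γ hp₀ hp hex hα (hN := hN) hβj hpβ
end

section
/- Any (α,γ)-prolongation of a central extension E₀ induces a homomorphism θ : G → Aut(E₀) (where E₀ = B₀/ker α) such that (E₀, G, γ∘π, θ) is a crossed module; that is: (C1) θ_{γπ(e₀)} is conjugation by e₀ in E₀ for all e₀ ∈ E₀, and (C2) γπ(θ_g(e₀)) = g · γπ(e₀) · g⁻¹ for all g ∈ G, e₀ ∈ E₀. -/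
/-!
Conjugation in `B` preserves `p⁻¹(γ G₀)`, which a diagram chase identifies with the image of
`E₀ = B₀ / j₀(ker α)` under the injection `ε`. The kernel `j(A) = β(j₀ A₀)` of `p` is the image
of central elements of `B₀`, so it centralizes `ε(E₀)`; hence conjugation by `b` on `E₀`
depends only on `p b`, which gives `θ`. The crossed module axioms then hold because
`γ ∘ π = p ∘ ε`.
-/

open Function

def IsCrossedModule {E G : Type*} [Group E] [Group G] (d : E →* G) (θ : G →* MulAut E) : Prop :=
  (∀ e e' : E, θ (d e) e' = e * e' * e⁻¹) ∧ ∀ (g : G) (e : E), d (θ g e) = g * d e * g⁻¹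

section ConjugationAction

variable {E B G : Type*} [Group E] [Group B] [Group G]

noncomputable def MonoidHom.conjAutOfNormalRange (ε : E →* B) (hε : Injective ε)
    [ε.range.Normal] : B →* MulAut E :=
  (MulAut.congr (MonoidHom.ofInjective hε).symm).toMonoidHom.comp MulAut.conjNormal

theorem MonoidHom.apply_conjAutOfNormalRange (ε : E →* B) (hε : Injective ε) [ε.range.Normal]
    (b : B) (e : E) : ε (ε.conjAutOfNormalRange hε b e) = b * ε e * b⁻¹ := by
  simp [conjAutOfNormalRange, ← MonoidHom.ofInjective_apply hε, MulAut.conjNormal_apply]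

theorem MonoidHom.centralizer_range_le_ker_conjAutOfNormalRange (ε : E →* B) (hε : Injective ε)
    [ε.range.Normal] : Subgroup.centralizer ε.range ≤ (ε.conjAutOfNormalRange hε).ker := by
  intro c hc
  refine MulEquiv.ext fun e ↦ hε ?_
  rw [apply_conjAutOfNormalRange, MulAut.one_apply,
    ← Subgroup.mem_centralizer_iff.mp hc _ ⟨e, rfl⟩, mul_inv_cancel_right]

theorem exists_mulAut_conj_of_ker_le_centralizer (ε : E →* B) (hε : Injective ε)
    [ε.range.Normal] (p : B →* G) (hp : Surjective p)
    (hker : p.ker ≤ Subgroup.centralizer ε.range) :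
    ∃ θ : G →* MulAut E, ∀ (b : B) (e : E), ε (θ (p b) e) = b * ε e * b⁻¹ :=
  ⟨p.liftOfSurjective hp ⟨_, hker.trans (ε.centralizer_range_le_ker_conjAutOfNormalRange hε)⟩,
    fun b e ↦ by rw [MonoidHom.liftOfRightInverse_comp_apply, ε.apply_conjAutOfNormalRange]⟩

theorem isCrossedModule_comp_of_apply_conj (ε : E →* B) (hε : Injective ε) (p : B →* G)
    (hp : Surjective p) (θ : G →* MulAut E)
    (hθ : ∀ (b : B) (e : E), ε (θ (p b) e) = b * ε e * b⁻¹) :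
    IsCrossedModule (p.comp ε) θ := by
  refine ⟨fun e e' ↦ hε ?_, fun g e ↦ ?_⟩
  · simp only [MonoidHom.comp_apply, hθ, map_mul, map_inv]
  · obtain ⟨b, rfl⟩ := hp g
    simp only [MonoidHom.comp_apply, hθ, map_mul, map_inv]

end ConjugationAction

section QuotientLift

variable {B₀ B : Type*} [Group B₀] [Group B] {N : Subgroup B₀} [N.Normal]

theorem range_eq_of_apply_mk {ε : B₀ ⧸ N →* B} {β : B₀ →* B}
    (hε : ∀ b₀ : B₀, ε (QuotientGroup.mk b₀) = β b₀) : ε.range = β.range := by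
  ext y
  constructor
  · rintro ⟨e, rfl⟩
    obtain ⟨b₀, rfl⟩ := QuotientGroup.mk_surjective e
    exact ⟨b₀, (hε b₀).symm⟩
  · rintro ⟨b₀, rfl⟩
    exact ⟨_, hε b₀⟩

theorem injective_of_apply_mk {ε : B₀ ⧸ N →* B} {β : B₀ →* B}
    (hε : ∀ b₀ : B₀, ε (QuotientGroup.mk b₀) = β b₀) (hker : β.ker = N) : Injective ε := by
  rw [injective_iff_map_eq_one]
  intro e he
  obtain ⟨b₀, rfl⟩ := QuotientGroup.mk_surjective e
  rw [hε] at he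
  rw [QuotientGroup.eq_one_iff, ← hker]
  exact he

end QuotientLift

section Prolongation

variable {A₀ B₀ G₀ A B G : Type*} [Group A₀] [Group B₀] [Group G₀] [Group A] [Group B] [Group G]
  {j₀ : A₀ →* B₀} {p₀ : B₀ →* G₀} {j : A →* B} {p : B →* G}
  {α : A₀ →* A} {β : B₀ →* B} {γ : G₀ →* G}

theorem ker_eq_map_ker_of_prolongation (hex₀ : j₀.range = p₀.ker) (hj : Injective j)
    (hγ : Injective γ) (hβj : β.comp j₀ = j.comp α) (hpβ : p.comp β = γ.comp p₀) :
    β.ker = Subgroup.map j₀ α.ker := by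
  apply le_antisymm
  · intro b₀ (hb₀ : β b₀ = 1)
    have hp₀b₀ : p₀ b₀ = 1 := hγ <| by
      rw [← MonoidHom.comp_apply γ p₀, ← hpβ, MonoidHom.comp_apply, hb₀, map_one, map_one]
    obtain ⟨a₀, rfl⟩ : b₀ ∈ j₀.range := hex₀ ▸ hp₀b₀
    refine ⟨a₀, hj ?_, rfl⟩
    rw [← MonoidHom.comp_apply j α, ← hβj, MonoidHom.comp_apply, hb₀, map_one]
  · rintro _ ⟨a₀, ha₀, rfl⟩
    rw [MonoidHom.mem_ker, ← MonoidHom.comp_apply, hβj, MonoidHom.comp_apply, ha₀, map_one]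

theorem range_eq_comap_range_of_prolongation (hp₀ : Surjective p₀) (hex : j.range = p.ker)
    (hα : Surjective α) (hβj : β.comp j₀ = j.comp α) (hpβ : p.comp β = γ.comp p₀) :
    β.range = γ.range.comap p := by
  apply le_antisymm
  · rintro _ ⟨b₀, rfl⟩
    exact ⟨p₀ b₀, (DFunLike.congr_fun hpβ b₀).symm⟩
  · rintro y ⟨g₀, hg₀⟩
    obtain ⟨b₀, rfl⟩ := hp₀ g₀
    have hy : y * (β b₀)⁻¹ ∈ p.ker := by
      rw [MonoidHom.mem_ker, map_mul, map_inv, ← MonoidHom.comp_apply p β, hpβ,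
        MonoidHom.comp_apply, hg₀, mul_inv_cancel]
    obtain ⟨a, ha⟩ : y * (β b₀)⁻¹ ∈ j.range := hex ▸ hy
    obtain ⟨a₀, rfl⟩ := hα a
    refine ⟨j₀ a₀ * b₀, ?_⟩
    rw [map_mul, ← MonoidHom.comp_apply, hβj, MonoidHom.comp_apply, ha, inv_mul_cancel_right]

theorem ker_le_centralizer_range_of_prolongation (hex : j.range = p.ker) (hα : Surjective α)
    (hβj : β.comp j₀ = j.comp α) (hcent : j₀.range ≤ Subgroup.center B₀) :
    p.ker ≤ Subgroup.centralizer β.range := by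
  intro c hc
  obtain ⟨a, rfl⟩ : c ∈ j.range := hex ▸ hc
  obtain ⟨a₀, rfl⟩ := hα a
  rintro _ ⟨b₀, rfl⟩
  rw [← MonoidHom.comp_apply j α, ← hβj, MonoidHom.comp_apply, ← map_mul, ← map_mul,
    Subgroup.mem_center_iff.mp (hcent ⟨a₀, rfl⟩) b₀]

end Prolongation

theorem stmt6_general {A₀ B₀ G₀ A B G : Type*} [Group A₀] [Group B₀] [Group G₀]
    [Group A] [Group B] [Group G]
    (j₀ : A₀ →* B₀) (p₀ : B₀ →* G₀) (j : A →* B) (p : B →* G)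
    (α : A₀ →* A) (β : B₀ →* B) (γ : G₀ →* G)
    (hp₀ : Function.Surjective p₀)
    (hex₀ : j₀.range = p₀.ker)
    (hj : Function.Injective j) (hp : Function.Surjective p)
    (hex : j.range = p.ker)
    (hα : Function.Surjective α) (hγ : Function.Injective γ)
    [hN : γ.range.Normal] [hNα : (Subgroup.map j₀ α.ker).Normal]
    (hβj : β.comp j₀ = j.comp α) (hpβ : p.comp β = γ.comp p₀)
    (hcent : j₀.range ≤ Subgroup.center B₀)
    -- the induced maps π and ε of E₀ = B₀/ker α
    (π : (B₀ ⧸ Subgroup.map j₀ α.ker) →* G₀)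
    (hπ : ∀ b₀ : B₀, π (QuotientGroup.mk b₀) = p₀ b₀)
    (ε : (B₀ ⧸ Subgroup.map j₀ α.ker) →* B)
    (hεdef : ∀ b₀ : B₀, ε (QuotientGroup.mk b₀) = β b₀) :
    ∃ θ : G →* MulAut (B₀ ⧸ Subgroup.map j₀ α.ker),
      (∀ (b : B) (e₀ : B₀ ⧸ Subgroup.map j₀ α.ker),
        ε (θ (p b) e₀) = b * ε e₀ * b⁻¹) ∧
      (∀ e₀ e' : B₀ ⧸ Subgroup.map j₀ α.ker, θ (γ (π e₀)) e' = e₀ * e' * e₀⁻¹) ∧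
      (∀ (g : G) (e₀ : B₀ ⧸ Subgroup.map j₀ α.ker),
        γ (π (θ g e₀)) = g * γ (π e₀) * g⁻¹) := by
  have hεinj : Injective ε := injective_of_apply_mk hεdef
    (ker_eq_map_ker_of_prolongation hex₀ hj hγ hβj hpβ)
  have hrange : ε.range = γ.range.comap p := (range_eq_of_apply_mk hεdef).trans
    (range_eq_comap_range_of_prolongation hp₀ hex hα hβj hpβ)
  have : ε.range.Normal := hrange ▸ hN.comap p
  have hker : p.ker ≤ Subgroup.centralizer ε.range := range_eq_of_apply_mk hεdef ▸
    ker_le_centralizer_range_of_prolongation hex hα hβj hcent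
  obtain ⟨θ, hθ⟩ := exists_mulAut_conj_of_ker_le_centralizer ε hεinj p hp hker
  have hpε : p.comp ε = γ.comp π := by
    ext b₀
    simp only [MonoidHom.comp_apply, QuotientGroup.mk'_apply, hεdef, hπ]
    exact DFunLike.congr_fun hpβ b₀
  obtain ⟨hC1, hC2⟩ := hpε ▸ isCrossedModule_comp_of_apply_conj ε hεinj p hp θ hθ
  exact ⟨θ, hθ, hC1, hC2⟩

/-- Any (α,γ)-prolongation of a central extension induces a
homomorphism θ : G → Aut(E₀), θ_g = φ_b for p(b) = g, such that
(E₀, G, γ∘π, θ) is a crossed module: (C1) θ_{γπ(e₀)} is conjugation by e₀ and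
(C2) γπ(θ_g e₀) = g · γπ(e₀) · g⁻¹. -/
theorem stmt6 {A₀ B₀ G₀ A B G : Type*} [Group A₀] [Group B₀] [Group G₀]
    [Group A] [Group B] [Group G]
    (j₀ : A₀ →* B₀) (p₀ : B₀ →* G₀) (j : A →* B) (p : B →* G)
    (α : A₀ →* A) (β : B₀ →* B) (γ : G₀ →* G)
    (hj₀ : Function.Injective j₀) (hp₀ : Function.Surjective p₀)
    (hex₀ : j₀.range = p₀.ker)
    (hj : Function.Injective j) (hp : Function.Surjective p)
    (hex : j.range = p.ker)
    (hα : Function.Surjective α) (hγ : Function.Injective γ)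
    [hN : γ.range.Normal] [hNα : (Subgroup.map j₀ α.ker).Normal]
    (hβj : β.comp j₀ = j.comp α) (hpβ : p.comp β = γ.comp p₀)
    (hcent : j₀.range ≤ Subgroup.center B₀)
    -- the induced maps π and ε of E₀ = B₀/ker α
    (π : (B₀ ⧸ Subgroup.map j₀ α.ker) →* G₀)
    (hπ : ∀ b₀ : B₀, π (QuotientGroup.mk b₀) = p₀ b₀)
    (ε : (B₀ ⧸ Subgroup.map j₀ α.ker) →* B)
    (hεdef : ∀ b₀ : B₀, ε (QuotientGroup.mk b₀) = β b₀) :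
    ∃ θ : G →* MulAut (B₀ ⧸ Subgroup.map j₀ α.ker),
      (∀ (b : B) (e₀ : B₀ ⧸ Subgroup.map j₀ α.ker),
        ε (θ (p b) e₀) = b * ε e₀ * b⁻¹) ∧
      (∀ e₀ e' : B₀ ⧸ Subgroup.map j₀ α.ker, θ (γ (π e₀)) e' = e₀ * e' * e₀⁻¹) ∧
      (∀ (g : G) (e₀ : B₀ ⧸ Subgroup.map j₀ α.ker),
        γ (π (θ g e₀)) = g * γ (π e₀) * g⁻¹) :=
  stmt6_general j₀ p₀ j p α β γ hp₀ hex₀ hj hp hex hα hγ (hN := hN) (hNα := hNα) hβj hpβ hcent π hπ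
    ε hεdef
end

section
/- In the setting above, the function k : Π₀³ → A defined by φ(x)(h(y,z)) · h(x,yz) = h(x,y) · h(xy,z) · k(x,y,z) is a 3-cocycle of Π₀ with coefficients in the Π₀-module A (with A central in E₀ and the Π₀-action induced by θ via x·a = θ_{u_x}(a) for a ∈ A ⊆ E₀). -/
/-!
Applying `d` to the relation defining `k` and using the twisted cocycle identity satisfied by
`f = d ∘ h` gives `d (k x y z) = 1`, so every `k x y z` is central. For the cocycle identity,
expand `θ_{u_x} θ_{u_y} (h(z,w)) · θ_{u_x} (h(y,zw)) · h(x,yzw)` in two ways: once by applying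
`θ_{u_x}` to the relation for `(y,z,w)`, once by rewriting `θ_{u_x} θ_{u_y}` as conjugation by
`h(x,y)` after `θ_{u_{xy}}` (Peiffer identity). Both give a product of values of `k` times
`h(x,y) h(xy,z) h(xyz,w)`, and centrality lets the `k`s be collected in front and compared.
-/

section ObstructionCocycle

variable {E G Q : Type*} [Group E] [Group G] [Semigroup Q]
  {d : E →* G} {θ : G →* MulAut E} {u : Q → G} {h : Q → Q → E} {k : Q → Q → Q → E}

theorem defect_twisted_cocycle (x y z : Q) :
    u x * (u y * u z * (u (y * z))⁻¹) * (u x)⁻¹ * (u x * u (y * z) * (u (x * (y * z)))⁻¹)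
      = u x * u y * (u (x * y))⁻¹ * (u (x * y) * u z * (u (x * y * z))⁻¹) := by
  rw [mul_assoc x y z]
  group

theorem obstruction_mem_ker (hC2 : ∀ (g : G) (e : E), d (θ g e) = g * d e * g⁻¹)
    (hh : ∀ x y, d (h x y) = u x * u y * (u (x * y))⁻¹)
    (hk : ∀ x y z, θ (u x) (h y z) * h x (y * z) = h x y * h (x * y) z * k x y z)
    (x y z : Q) : k x y z ∈ d.ker := by
  have hd := congrArg d (hk x y z)
  simp only [map_mul, hC2, hh, defect_twisted_cocycle] at hd
  exact MonoidHom.mem_ker.mpr (mul_eq_left.mp hd.symm)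

theorem action_action_eq_conj (hC1 : ∀ e e' : E, θ (d e) e' = e * e' * e⁻¹)
    (hh : ∀ x y, d (h x y) = u x * u y * (u (x * y))⁻¹) (x y : Q) (e : E) :
    θ (u x) (θ (u y) e) = h x y * θ (u (x * y)) e * (h x y)⁻¹ := by
  have hu : u x * u y = d (h x y) * u (x * y) := by rw [hh]; group
  rw [← MulAut.mul_apply, ← map_mul, hu, map_mul, MulAut.mul_apply, hC1]

variable (hk : ∀ x y z, θ (u x) (h y z) * h x (y * z) = k x y z * (h x y * h (x * y) z))
  (hcent : ∀ x y z, k x y z ∈ Subgroup.center E)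
include hk hcent

theorem expand_by_relation (x y z w : Q) :
    θ (u x) (θ (u y) (h z w)) * θ (u x) (h y (z * w)) * h x (y * (z * w))
      = θ (u x) (k y z w) * k x (y * z) w * k x y z * (h x y * h (x * y) z * h (x * y * z) w) := by
  have hcomm := (Set.mem_center_iff.mp (hcent x (y * z) w)).left_comm (θ (u x) (h y z))
  calc θ (u x) (θ (u y) (h z w)) * θ (u x) (h y (z * w)) * h x (y * (z * w))
      = θ (u x) (k y z w * (h y z * h (y * z) w)) * h x (y * (z * w)) := by
        rw [← hk, map_mul]
    _ = θ (u x) (k y z w) * θ (u x) (h y z) * (θ (u x) (h (y * z) w) * h x (y * z * w)) := by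
        rw [map_mul, map_mul, mul_assoc y z w]; group
    _ = θ (u x) (k y z w) * k x (y * z) w * (θ (u x) (h y z) * h x (y * z))
          * h (x * (y * z)) w := by
        rw [hk, mul_assoc _ (θ (u x) (h y z)), ← hcomm]; group
    _ = θ (u x) (k y z w) * k x (y * z) w * k x y z * (h x y * h (x * y) z * h (x * y * z) w) := by
        rw [hk, mul_assoc x y z]; group

theorem expand_by_peiffer (hC1 : ∀ e e' : E, θ (d e) e' = e * e' * e⁻¹)
    (hh : ∀ x y, d (h x y) = u x * u y * (u (x * y))⁻¹) (x y z w : Q) :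
    θ (u x) (θ (u y) (h z w)) * θ (u x) (h y (z * w)) * h x (y * (z * w))
      = k x y (z * w) * k (x * y) z w * (h x y * h (x * y) z * h (x * y * z) w) := by
  calc θ (u x) (θ (u y) (h z w)) * θ (u x) (h y (z * w)) * h x (y * (z * w))
      = h x y * θ (u (x * y)) (h z w) * (h x y)⁻¹
          * (θ (u x) (h y (z * w)) * h x (y * (z * w))) := by
        rw [action_action_eq_conj hC1 hh]; group
    _ = k x y (z * w) * (h x y * (θ (u (x * y)) (h z w) * h (x * y) (z * w))) := by
        rw [hk, ← (Set.mem_center_iff.mp (hcent x y (z * w))).left_comm]; group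
    _ = k x y (z * w) * (h x y * (k (x * y) z w * (h (x * y) z * h (x * y * z) w))) := by
        rw [hk]
    _ = k x y (z * w) * k (x * y) z w * (h x y * h (x * y) z * h (x * y * z) w) := by
        rw [← (Set.mem_center_iff.mp (hcent (x * y) z w)).left_comm]; group

theorem obstruction_cocycle (hC1 : ∀ e e' : E, θ (d e) e' = e * e' * e⁻¹)
    (hh : ∀ x y, d (h x y) = u x * u y * (u (x * y))⁻¹) (x y z w : Q) :
    θ (u x) (k y z w) * k x (y * z) w * k x y z = k (x * y) z w * k x y (z * w) := by
  have hexp := (expand_by_relation hk hcent x y z w).symm.trans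
    (expand_by_peiffer hk hcent hC1 hh x y z w)
  rw [mul_right_cancel hexp]
  exact Subgroup.mem_center_iff.mp (hcent (x * y) z w) _

end ObstructionCocycle

theorem stmt11_general {E₀ G : Type*} [Group E₀] [Group G]
    (d : E₀ →* G) (θ : G →* MulAut E₀)
    (hC1 : ∀ e e' : E₀, θ (d e) e' = e * e' * e⁻¹)
    (hC2 : ∀ (g : G) (e : E₀), d (θ g e) = g * d e * g⁻¹)
    (hcent : d.ker ≤ Subgroup.center E₀)
    [hN : d.range.Normal]
    (u : (G ⧸ d.range) → G)
    (h : (G ⧸ d.range) → (G ⧸ d.range) → E₀)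
    (hh : ∀ x y, d (h x y) = u x * u y * (u (x * y))⁻¹)
    (k : (G ⧸ d.range) → (G ⧸ d.range) → (G ⧸ d.range) → E₀)
    (hk : ∀ x y z, θ (u x) (h y z) * h x (y * z) = h x y * h (x * y) z * k x y z) :
    (∀ x y z, k x y z ∈ d.ker) ∧
      (∀ x y z w, θ (u x) (k y z w) * k x (y * z) w * k x y z
        = k (x * y) z w * k x y (z * w)) := by
  have hker := obstruction_mem_ker hC2 hh hk
  have hkcent x y z : k x y z ∈ Subgroup.center E₀ := hcent (hker x y z)
  have hk' x y z : θ (u x) (h y z) * h x (y * z) = k x y z * (h x y * h (x * y) z) := by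
    rw [hk, Subgroup.mem_center_iff.mp (hkcent x y z)]
  exact ⟨hker, obstruction_cocycle hk' hkcent hC1 hh⟩

/-- The function k : Π₀³ → A defined by
θ_{u_x}(h(y,z)) · h(x,yz) = h(x,y) · h(xy,z) · k(x,y,z) is a 3-cocycle of Π₀ with
coefficients in the Π₀-module A = ker d ⊆ Z(E₀) (action x·a = θ_{u_x}(a)):
x·k(y,z,w) · k(x,yz,w) · k(x,y,z) = k(xy,z,w) · k(x,y,zw). -/
theorem stmt11 {E₀ G : Type*} [Group E₀] [Group G]
    (d : E₀ →* G) (θ : G →* MulAut E₀)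
    (hC1 : ∀ e e' : E₀, θ (d e) e' = e * e' * e⁻¹)
    (hC2 : ∀ (g : G) (e : E₀), d (θ g e) = g * d e * g⁻¹)
    (hcent : d.ker ≤ Subgroup.center E₀)
    [hN : d.range.Normal]
    (u : (G ⧸ d.range) → G)
    (hu : ∀ x, QuotientGroup.mk' d.range (u x) = x) (hu1 : u 1 = 1)
    (h : (G ⧸ d.range) → (G ⧸ d.range) → E₀)
    (hh : ∀ x y, d (h x y) = u x * u y * (u (x * y))⁻¹)
    (hhx1 : ∀ x, h x 1 = 1) (hh1y : ∀ y, h 1 y = 1)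
    (k : (G ⧸ d.range) → (G ⧸ d.range) → (G ⧸ d.range) → E₀)
    (hk : ∀ x y z, θ (u x) (h y z) * h x (y * z) = h x y * h (x * y) z * k x y z) :
    (∀ x y z, k x y z ∈ d.ker) ∧
      (∀ x y z w, θ (u x) (k y z w) * k x (y * z) w * k x y z
        = k (x * y) z w * k x y (z * w)) :=
  stmt11_general d θ hC1 hC2 hcent (hN := hN) u h hh k hk
end

section
/- With u fixed, if h' : Π₀² → E₀ is another normalized lift of f along d (i.e. d∘h' = f, h'(x,1)=h'(1,y)=1), then h' = h·l for a normalized function l : Π₀² → A, and the corresponding 3-cocycle k' differs from k by the coboundary δl: k' = k · δl. Hence the cohomology class [k] ∈ H³(Π₀, A) is independent of the choice of h, and any cocycle cohomologous to k arises from some choice of h. -/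
/-!
Two lifts of the same `f` along `d` differ pointwise by an element of `A = ker d`, and conversely
multiplying a lift by an `A`-valued function gives another lift. Since `A` is central and `θ`
preserves it, the obstruction equation of `h · l` is that of `h` with the `A`-factors collected
on the right, and these collect exactly into `δl`.
-/

theorem mul_mul_eq_mul_mul_mul_of_mem_center {E : Type*} [Group E] {P Q R S T a b c e : E}
    (ha : a ∈ Subgroup.center E) (hc : c ∈ Subgroup.center E) (he : e ∈ Subgroup.center E)
    (h : P * Q = R * S * T) :
    P * a * (Q * b) = R * c * (S * e) * (T * (a * b * e⁻¹ * c⁻¹)) := by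
  rw [Subgroup.mem_center_iff] at ha hc he
  calc P * a * (Q * b)
      = P * Q * (a * b) := by rw [mul_assoc P, ← mul_assoc a, ← ha, mul_assoc, mul_assoc]
    _ = R * S * T * (c * e * (a * b * e⁻¹ * c⁻¹)) := by
        rw [h, mul_assoc c, ← hc, mul_assoc e, ← he]; group
    _ = R * c * (S * e) * (T * (a * b * e⁻¹ * c⁻¹)) := by
        simp only [mul_assoc]
        rw [← mul_assoc c S, ← hc S, mul_assoc S c, ← mul_assoc e T, ← he T, mul_assoc T e,
          ← mul_assoc c T, ← hc T, mul_assoc T c]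

namespace CrossedModule

variable {E₀ G M : Type*} [Group E₀] [Group G] [Mul M]

/-- The coboundary `δl` of the paper, written multiplicatively, for the action `x ↦ θ (σ x)`. -/
def coboundary (θ : G →* MulAut E₀) (σ : M → G) (l : M → M → E₀) (x y z : M) : E₀ :=
  θ (σ x) (l y z) * l x (y * z) * (l (x * y) z)⁻¹ * (l x y)⁻¹

theorem apply_mem_ker {d : E₀ →* G} {θ : G →* MulAut E₀}
    (hC2 : ∀ (g : G) (e : E₀), d (θ g e) = g * d e * g⁻¹) (g : G) {a : E₀} (ha : a ∈ d.ker) :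
    θ g a ∈ d.ker := by
  rw [MonoidHom.mem_ker] at ha ⊢
  rw [hC2, ha, mul_one, mul_inv_cancel]

theorem obstruction_mul {d : E₀ →* G} {θ : G →* MulAut E₀}
    (hC2 : ∀ (g : G) (e : E₀), d (θ g e) = g * d e * g⁻¹)
    (hcent : d.ker ≤ Subgroup.center E₀) {σ : M → G} {h : M → M → E₀} {k : M → M → M → E₀}
    {x y z : M} (hk : θ (σ x) (h y z) * h x (y * z) = h x y * h (x * y) z * k x y z)
    {l : M → M → E₀} (hl : ∀ x y, l x y ∈ d.ker) :
    θ (σ x) (h y z * l y z) * (h x (y * z) * l x (y * z)) =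
      h x y * l x y * (h (x * y) z * l (x * y) z) * (k x y z * coboundary θ σ l x y z) := by
  rw [map_mul]
  exact mul_mul_eq_mul_mul_mul_of_mem_center (hcent (apply_mem_ker hC2 _ (hl y z)))
    (hcent (hl x y)) (hcent (hl (x * y) z)) hk

end CrossedModule

open CrossedModule in
theorem stmt12_general {E₀ G : Type*} [Group E₀] [Group G]
    (d : E₀ →* G) (θ : G →* MulAut E₀)
    (hC2 : ∀ (g : G) (e : E₀), d (θ g e) = g * d e * g⁻¹)
    (hcent : d.ker ≤ Subgroup.center E₀)
    [hN : d.range.Normal]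
    (u : (G ⧸ d.range) → G)
    -- the normalized lift h of f and its obstruction cocycle k
    (h : (G ⧸ d.range) → (G ⧸ d.range) → E₀)
    (hh : ∀ x y, d (h x y) = u x * u y * (u (x * y))⁻¹)
    (hhx1 : ∀ x, h x 1 = 1) (hh1y : ∀ y, h 1 y = 1)
    (k : (G ⧸ d.range) → (G ⧸ d.range) → (G ⧸ d.range) → E₀)
    (hk : ∀ x y z, θ (u x) (h y z) * h x (y * z) = h x y * h (x * y) z * k x y z)
    -- another normalized lift h' of f and its obstruction cocycle k'
    (h' : (G ⧸ d.range) → (G ⧸ d.range) → E₀)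
    (hh' : ∀ x y, d (h' x y) = u x * u y * (u (x * y))⁻¹)
    (hh'x1 : ∀ x, h' x 1 = 1) (hh'1y : ∀ y, h' 1 y = 1)
    (k' : (G ⧸ d.range) → (G ⧸ d.range) → (G ⧸ d.range) → E₀)
    (hk' : ∀ x y z,
      θ (u x) (h' y z) * h' x (y * z) = h' x y * h' (x * y) z * k' x y z) :
    -- (1) k' is cohomologous to k: h' = h·l for a normalized l with values in
    -- A = ker d, and k' = k · δl
    (∃ l : (G ⧸ d.range) → (G ⧸ d.range) → E₀,
      (∀ x y, l x y ∈ d.ker) ∧ (∀ x, l x 1 = 1) ∧ (∀ y, l 1 y = 1) ∧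
      (∀ x y, h' x y = h x y * l x y) ∧
      (∀ x y z, k' x y z =
        k x y z * (θ (u x) (l y z) * l x (y * z) * (l (x * y) z)⁻¹ * (l x y)⁻¹))) ∧
    -- (2) conversely, any cocycle cohomologous to k arises from some change of h:
    -- for any normalized l with values in A, h·l is a normalized lift of f whose
    -- obstruction is k · δl
    (∀ l : (G ⧸ d.range) → (G ⧸ d.range) → E₀,
      (∀ x y, l x y ∈ d.ker) → (∀ x, l x 1 = 1) → (∀ y, l 1 y = 1) →
      (∀ x y, d (h x y * l x y) = u x * u y * (u (x * y))⁻¹) ∧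
      (∀ x, h x 1 * l x 1 = 1) ∧ (∀ y, h 1 y * l 1 y = 1) ∧
      (∀ x y z, θ (u x) (h y z * l y z) * (h x (y * z) * l x (y * z)) =
        (h x y * l x y) * (h (x * y) z * l (x * y) z) *
          (k x y z * (θ (u x) (l y z) * l x (y * z) * (l (x * y) z)⁻¹ * (l x y)⁻¹)))) := by
  refine ⟨?_, fun l hl hl1 h1l => ⟨?_, ?_, ?_, fun x y z => obstruction_mul hC2 hcent (hk x y z) hl⟩⟩
  · set l := fun x y => (h x y)⁻¹ * h' x y
    have hl : ∀ x y, l x y ∈ d.ker := fun x y => (d.eq_iff).mp ((hh' x y).trans (hh x y).symm)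
    have hh'_eq : ∀ x y, h' x y = h x y * l x y := fun x y => (mul_inv_cancel_left _ _).symm
    refine ⟨l, hl, fun x => by simp [l, hhx1, hh'x1], fun y => by simp [l, hh1y, hh'1y], hh'_eq,
      fun x y z => ?_⟩
    have := obstruction_mul hC2 hcent (hk x y z) hl
    rw [← hh'_eq, ← hh'_eq, ← hh'_eq, ← hh'_eq, hk'] at this
    exact mul_left_cancel this
  · intro x y
    rw [map_mul, (MonoidHom.mem_ker).mp (hl x y), mul_one, hh]
  · intro x; rw [hhx1, hl1, one_mul]
  · intro y; rw [hh1y, h1l, one_mul]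

/-- With the section u fixed, a change of the normalized lift h of f
replaces the obstruction cocycle k by a cohomologous one (k' = k · δl), and
conversely every cocycle cohomologous to k arises from a suitable change of h. -/
theorem stmt12 {E₀ G : Type*} [Group E₀] [Group G]
    (d : E₀ →* G) (θ : G →* MulAut E₀)
    (hC1 : ∀ e e' : E₀, θ (d e) e' = e * e' * e⁻¹)
    (hC2 : ∀ (g : G) (e : E₀), d (θ g e) = g * d e * g⁻¹)
    (hcent : d.ker ≤ Subgroup.center E₀)
    [hN : d.range.Normal]
    (u : (G ⧸ d.range) → G)
    (hu : ∀ x, QuotientGroup.mk' d.range (u x) = x) (hu1 : u 1 = 1)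
    -- the normalized lift h of f and its obstruction cocycle k
    (h : (G ⧸ d.range) → (G ⧸ d.range) → E₀)
    (hh : ∀ x y, d (h x y) = u x * u y * (u (x * y))⁻¹)
    (hhx1 : ∀ x, h x 1 = 1) (hh1y : ∀ y, h 1 y = 1)
    (k : (G ⧸ d.range) → (G ⧸ d.range) → (G ⧸ d.range) → E₀)
    (hk : ∀ x y z, θ (u x) (h y z) * h x (y * z) = h x y * h (x * y) z * k x y z)
    -- another normalized lift h' of f and its obstruction cocycle k'
    (h' : (G ⧸ d.range) → (G ⧸ d.range) → E₀)
    (hh' : ∀ x y, d (h' x y) = u x * u y * (u (x * y))⁻¹)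
    (hh'x1 : ∀ x, h' x 1 = 1) (hh'1y : ∀ y, h' 1 y = 1)
    (k' : (G ⧸ d.range) → (G ⧸ d.range) → (G ⧸ d.range) → E₀)
    (hk' : ∀ x y z,
      θ (u x) (h' y z) * h' x (y * z) = h' x y * h' (x * y) z * k' x y z) :
    -- (1) k' is cohomologous to k: h' = h·l for a normalized l with values in
    -- A = ker d, and k' = k · δl
    (∃ l : (G ⧸ d.range) → (G ⧸ d.range) → E₀,
      (∀ x y, l x y ∈ d.ker) ∧ (∀ x, l x 1 = 1) ∧ (∀ y, l 1 y = 1) ∧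
      (∀ x y, h' x y = h x y * l x y) ∧
      (∀ x y z, k' x y z =
        k x y z * (θ (u x) (l y z) * l x (y * z) * (l (x * y) z)⁻¹ * (l x y)⁻¹))) ∧
    -- (2) conversely, any cocycle cohomologous to k arises from some change of h:
    -- for any normalized l with values in A, h·l is a normalized lift of f whose
    -- obstruction is k · δl
    (∀ l : (G ⧸ d.range) → (G ⧸ d.range) → E₀,
      (∀ x y, l x y ∈ d.ker) → (∀ x, l x 1 = 1) → (∀ y, l 1 y = 1) →
      (∀ x y, d (h x y * l x y) = u x * u y * (u (x * y))⁻¹) ∧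
      (∀ x, h x 1 * l x 1 = 1) ∧ (∀ y, h 1 y * l 1 y = 1) ∧
      (∀ x y z, θ (u x) (h y z * l y z) * (h x (y * z) * l x (y * z)) =
        (h x y * l x y) * (h (x * y) z * l (x * y) z) *
          (k x y z * (θ (u x) (l y z) * l x (y * z) * (l (x * y) z)⁻¹ * (l x y)⁻¹)))) :=
  stmt12_general d θ hC2 hcent (hN := hN) u h hh hhx1 hh1y k hk h' hh' hh'x1 hh'1y k' hk'
end

section
/- With h fixed relative to a section u, if u' is another normalized section of σ : G → Π₀ (so u'_x = g_x u_x with g_x ∈ γ(G₀), g_1 = 1), and t : Π₀ → E₀ is chosen with d(t_x) = g_x, then h'(x,y) = t_x · θ_{u_x}(t_y) · h(x,y) · t_{xy}⁻¹ satisfies d(h'(x,y)) = u'_x u'_y (u'_{xy})⁻¹, and the 3-cocycle k' computed from (u', h') equals k. Hence the obstruction class [k] ∈ H³(Π₀, A) depends only on the data (α, γ, θ). -/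
/-! Writing `u' x = d (t x) * u x`, the automorphism `θ (u' x)` is `θ (u x)` followed by
conjugation by `t x`, and `θ (u x * u y)` is `θ (u (x * y))` conjugated by `h x y`. Expanding
the cocycle identity for `h'` with these two rules, the `t`'s cancel in pairs and what remains is
the identity defining `k`, up to moving `k` past `t (x * y * z)`: this is allowed because `d` kills
`k`, so `k` is central. -/

section CrossedModule

variable {E₀ G : Type*} [Group E₀] [Group G] {d : E₀ →* G} {θ : G →* MulAut E₀}

theorem map_d_mul_apply (hC1 : ∀ e e' : E₀, θ (d e) e' = e * e' * e⁻¹) (e : E₀) (g : G)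
    (e' : E₀) : θ (d e * g) e' = e * θ g e' * e⁻¹ := by
  rw [map_mul, MulAut.mul_apply, hC1]

variable {Q : Type*} {u u' : Q → G} {h : Q → Q → E₀} {t : Q → E₀}

variable (θ u h t) in
def twistLift [Mul Q] (x y : Q) : E₀ :=
  t x * θ (u x) (t y) * h x y * (t (x * y))⁻¹

theorem d_twistLift [Mul Q] (hC2 : ∀ (g : G) (e : E₀), d (θ g e) = g * d e * g⁻¹)
    (hh : ∀ x y, d (h x y) = u x * u y * (u (x * y))⁻¹)
    (ht : ∀ x, d (t x) = u' x * (u x)⁻¹) (x y : Q) :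
    d (twistLift θ u h t x y) = u' x * u' y * (u' (x * y))⁻¹ := by
  simp only [twistLift, map_mul, map_inv, hC2, hh, ht]
  group

theorem map_mul_apply_of_lift [Mul Q] (hC1 : ∀ e e' : E₀, θ (d e) e' = e * e' * e⁻¹)
    (hh : ∀ x y, d (h x y) = u x * u y * (u (x * y))⁻¹) (x y : Q) (e : E₀) :
    θ (u x * u y) e = h x y * θ (u (x * y)) e * (h x y)⁻¹ := by
  rw [← map_d_mul_apply hC1, hh, inv_mul_cancel_right]

theorem d_obstruction_eq_one [Semigroup Q] (hC2 : ∀ (g : G) (e : E₀), d (θ g e) = g * d e * g⁻¹)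
    (hh : ∀ x y, d (h x y) = u x * u y * (u (x * y))⁻¹) {k : Q → Q → Q → E₀}
    (hk : ∀ x y z, θ (u x) (h y z) * h x (y * z) = h x y * h (x * y) z * k x y z)
    (x y z : Q) : d (k x y z) = 1 := by
  have H := congrArg d (hk x y z)
  simp only [map_mul, hC2, hh, mul_assoc x y z] at H
  rw [eq_inv_mul_iff_mul_eq.mpr H.symm]
  group

theorem obstruction_twistLift [Semigroup Q] (hC1 : ∀ e e' : E₀, θ (d e) e' = e * e' * e⁻¹)
    (hC2 : ∀ (g : G) (e : E₀), d (θ g e) = g * d e * g⁻¹)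
    (hcent : d.ker ≤ Subgroup.center E₀)
    (hh : ∀ x y, d (h x y) = u x * u y * (u (x * y))⁻¹) {k : Q → Q → Q → E₀}
    (hk : ∀ x y z, θ (u x) (h y z) * h x (y * z) = h x y * h (x * y) z * k x y z)
    (ht : ∀ x, d (t x) = u' x * (u x)⁻¹) (x y z : Q) :
    θ (u' x) (twistLift θ u h t y z) * twistLift θ u h t x (y * z) =
      twistLift θ u h t x y * twistLift θ u h t (x * y) z * k x y z := by
  have hk_central : ∀ a, k x y z * a = a * k x y z := fun a =>
    (Subgroup.mem_center_iff.mp (hcent (d_obstruction_eq_one hC2 hh hk x y z)) a).symm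
  have hu' : u' x = d (t x) * u x := by rw [ht]; group
  calc θ (u' x) (twistLift θ u h t y z) * twistLift θ u h t x (y * z)
      = t x * θ (u x) (t y) * θ (u x * u y) (t z) * (θ (u x) (h y z) * h x (y * z)) *
          (t (x * y * z))⁻¹ := by
        rw [hu', map_d_mul_apply hC1]
        simp only [twistLift, map_mul, map_inv, MulAut.mul_apply, mul_assoc x y z]
        group
    _ = t x * θ (u x) (t y) * (h x y * θ (u (x * y)) (t z) * (h x y)⁻¹) *
          (h x y * h (x * y) z * k x y z) * (t (x * y * z))⁻¹ := by
        rw [map_mul_apply_of_lift hC1 hh, hk]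
    _ = _ := by
        simp only [twistLift, mul_assoc, hk_central]
        group

end CrossedModule

theorem stmt13_general {E₀ G : Type*} [Group E₀] [Group G]
    (d : E₀ →* G) (θ : G →* MulAut E₀)
    (hC1 : ∀ e e' : E₀, θ (d e) e' = e * e' * e⁻¹)
    (hC2 : ∀ (g : G) (e : E₀), d (θ g e) = g * d e * g⁻¹)
    (hcent : d.ker ≤ Subgroup.center E₀)
    [hN : d.range.Normal]
    -- the original section u, lift h, obstruction k
    (u : (G ⧸ d.range) → G)
    (h : (G ⧸ d.range) → (G ⧸ d.range) → E₀)
    (hh : ∀ x y, d (h x y) = u x * u y * (u (x * y))⁻¹)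
    (k : (G ⧸ d.range) → (G ⧸ d.range) → (G ⧸ d.range) → E₀)
    (hk : ∀ x y z, θ (u x) (h y z) * h x (y * z) = h x y * h (x * y) z * k x y z)
    -- another normalized section u', with u'_x = g_x · u_x, g_x ∈ im d lifted by t
    (u' : (G ⧸ d.range) → G)
    (t : (G ⧸ d.range) → E₀)
    (ht : ∀ x, d (t x) = u' x * (u x)⁻¹)
    -- the new lift h'
    (h' : (G ⧸ d.range) → (G ⧸ d.range) → E₀)
    (hh'def : ∀ x y, h' x y = t x * θ (u x) (t y) * h x y * (t (x * y))⁻¹) :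
    -- h' is a lift of the factor set of u', and the obstruction of (u',h') is k
    (∀ x y, d (h' x y) = u' x * u' y * (u' (x * y))⁻¹) ∧
    (∀ x y z, θ (u' x) (h' y z) * h' x (y * z) = h' x y * h' (x * y) z * k x y z) := by
  obtain rfl : h' = twistLift θ u h t := funext₂ hh'def
  exact ⟨d_twistLift hC2 hh ht, obstruction_twistLift hC1 hC2 hcent hh hk ht⟩

/-- A change of the normalized section u to u' (with u'_x = g_x u_x,
g_x ∈ im d), followed by the new lift h'(x,y) = t_x · θ_{u_x}(t_y) · h(x,y) · t_{xy}⁻¹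
where d(t_x) = g_x, leaves the obstruction cocycle k unchanged; hence
Obs(α,γ,θ) = [k] depends only on (α,γ,θ). -/
theorem stmt13 {E₀ G : Type*} [Group E₀] [Group G]
    (d : E₀ →* G) (θ : G →* MulAut E₀)
    (hC1 : ∀ e e' : E₀, θ (d e) e' = e * e' * e⁻¹)
    (hC2 : ∀ (g : G) (e : E₀), d (θ g e) = g * d e * g⁻¹)
    (hcent : d.ker ≤ Subgroup.center E₀)
    [hN : d.range.Normal]
    -- the original section u, lift h, obstruction k
    (u : (G ⧸ d.range) → G)
    (hu : ∀ x, QuotientGroup.mk' d.range (u x) = x) (hu1 : u 1 = 1)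
    (h : (G ⧸ d.range) → (G ⧸ d.range) → E₀)
    (hh : ∀ x y, d (h x y) = u x * u y * (u (x * y))⁻¹)
    (hhx1 : ∀ x, h x 1 = 1) (hh1y : ∀ y, h 1 y = 1)
    (k : (G ⧸ d.range) → (G ⧸ d.range) → (G ⧸ d.range) → E₀)
    (hk : ∀ x y z, θ (u x) (h y z) * h x (y * z) = h x y * h (x * y) z * k x y z)
    -- another normalized section u', with u'_x = g_x · u_x, g_x ∈ im d lifted by t
    (u' : (G ⧸ d.range) → G)
    (hu' : ∀ x, QuotientGroup.mk' d.range (u' x) = x) (hu'1 : u' 1 = 1)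
    (t : (G ⧸ d.range) → E₀)
    (ht : ∀ x, d (t x) = u' x * (u x)⁻¹) (ht1 : t 1 = 1)
    -- the new lift h'
    (h' : (G ⧸ d.range) → (G ⧸ d.range) → E₀)
    (hh'def : ∀ x y, h' x y = t x * θ (u x) (t y) * h x y * (t (x * y))⁻¹) :
    -- h' is a lift of the factor set of u', and the obstruction of (u',h') is k
    (∀ x y, d (h' x y) = u' x * u' y * (u' (x * y))⁻¹) ∧
    (∀ x y z, θ (u' x) (h' y z) * h' x (y * z) = h' x y * h' (x * y) z * k x y z) :=
  stmt13_general d θ hC1 hC2 hcent (hN := hN) u h hh k hk u' t ht h' hh'def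
end

section
/- Suppose a pre-prolongation (α, γ, θ) admits a covering (α,γ)-prolongation E (i.e., an extension 0 → A → B → G → 0 completing the diagram and inducing θ). Then the obstruction class Obs(α,γ,θ) = [k] vanishes in H³(Π₀, A). Concretely: one can choose a lift h : Π₀² → E₀ of the factor set f with φ(x)(h(y,z)) · h(x,yz) = h(x,y)·h(xy,z), i.e. k ≡ 1. -/
/-!
Lift the normalized section `u` to `v : Π₀ → B` with `v 1 = 1`. Its factor set
`v x * v y * (v (x * y))⁻¹` lies over `γ.range`, hence in the image of `ε`, and pulls back along
the injective `ε` to a lift `h` of the factor set of `u`. In `B` the factor set of any map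
satisfies the nonabelian cocycle identity with conjugation by `v x`, and since `E` induces `θ`,
conjugation by `v x` is `θ (u x)` transported by `ε`; so `h` satisfies it with `θ`, i.e. `k = 1`.
-/

section FactorSet

variable {Q B : Type*} [Group B]

def factorSet [Mul Q] (v : Q → B) (x y : Q) : B := v x * v y * (v (x * y))⁻¹

theorem factorSet_one_left [MulOneClass Q] {v : Q → B} (hv : v 1 = 1) (y : Q) :
    factorSet v 1 y = 1 := by
  simp [factorSet, hv]

theorem factorSet_one_right [MulOneClass Q] {v : Q → B} (hv : v 1 = 1) (x : Q) :
    factorSet v x 1 = 1 := by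
  simp [factorSet, hv]

theorem map_factorSet [Mul Q] {G : Type*} [Group G] (φ : B →* G) (v : Q → B) (x y : Q) :
    φ (factorSet v x y) = factorSet (φ ∘ v) x y := by
  simp [factorSet]

theorem factorSet_mem_ker [Group Q] {φ : B →* Q} {v : Q → B} (hv : Function.LeftInverse φ v)
    (x y : Q) : factorSet v x y ∈ φ.ker := by
  simp [MonoidHom.mem_ker, factorSet, hv _]

theorem factorSet_cocycle [Semigroup Q] (v : Q → B) (x y z : Q) :
    v x * factorSet v y z * (v x)⁻¹ * factorSet v x (y * z) =
      factorSet v x y * factorSet v (x * y) z := by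
  simp only [factorSet, mul_assoc]
  group

theorem cocycle_of_injective [Semigroup Q] {E : Type*} [Group E] {ε : E →* B}
    (hε : Function.Injective ε) {v : Q → B} {h : Q → Q → E}
    (hh : ∀ x y, ε (h x y) = factorSet v x y)
    (ψ : Q → E → E) (hψ : ∀ x e, ε (ψ x e) = v x * ε e * (v x)⁻¹) (x y z : Q) :
    ψ x (h y z) * h x (y * z) = h x y * h (x * y) z := by
  apply hε
  simp only [map_mul, hψ, hh]
  exact factorSet_cocycle v x y z

end FactorSet

theorem Function.Surjective.exists_lift_map_one {B G Q : Type*} [Group B] [Group G] [One Q]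
    {p : B →* G} (hp : Function.Surjective p) {u : Q → G} (hu : u 1 = 1) :
    ∃ v : Q → B, p ∘ v = u ∧ v 1 = 1 := by
  classical
  refine ⟨Function.update (Function.surjInv hp ∘ u) 1 1, funext fun x => ?_, by simp⟩
  by_cases hx : x = 1
  · simp [hx, hu]
  · simp [hx, Function.surjInv_eq hp]

theorem stmt14_general {A₀ B₀ G₀ A B G : Type*} [Group A₀] [Group B₀] [Group G₀]
    [Group A] [Group B] [Group G]
    -- the pre-prolongation data
    (j₀ : A₀ →* B₀) (p₀ : B₀ →* G₀) (α : A₀ →* A) (γ : G₀ →* G)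
    [hN : γ.range.Normal] [hNα : (Subgroup.map j₀ α.ker).Normal]
    (π : (B₀ ⧸ Subgroup.map j₀ α.ker) →* G₀)
    (hπ : ∀ b₀ : B₀, π (QuotientGroup.mk b₀) = p₀ b₀)
    (θ : G →* MulAut (B₀ ⧸ Subgroup.map j₀ α.ker))
    -- the covering (α,γ)-prolongation
    (p : B →* G) (β : B₀ →* B)
    (hp : Function.Surjective p)
    (hpβ : p.comp β = γ.comp p₀)
    (ε : (B₀ ⧸ Subgroup.map j₀ α.ker) →* B)
    (hεdef : ∀ b₀ : B₀, ε (QuotientGroup.mk b₀) = β b₀)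
    (hε : Function.Injective ε)
    (hεrange : ε.range = ((QuotientGroup.mk' γ.range).comp p).ker)
    -- E induces θ
    (hθ : ∀ (b : B) (e₀ : B₀ ⧸ Subgroup.map j₀ α.ker),
      ε (θ (p b) e₀) = b * ε e₀ * b⁻¹)
    -- a normalized section u of σ : G → Π₀
    (u : (G ⧸ γ.range) → G)
    (hu : ∀ x, QuotientGroup.mk' γ.range (u x) = x) (hu1 : u 1 = 1) :
    ∃ h : (G ⧸ γ.range) → (G ⧸ γ.range) → (B₀ ⧸ Subgroup.map j₀ α.ker),
      (∀ x y, γ (π (h x y)) = u x * u y * (u (x * y))⁻¹) ∧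
      (∀ x, h x 1 = 1) ∧ (∀ y, h 1 y = 1) ∧
      (∀ x y z, θ (u x) (h y z) * h x (y * z) = h x y * h (x * y) z) := by
  obtain ⟨v, hpv, hv1⟩ := hp.exists_lift_map_one hu1
  have hpε : p.comp ε = γ.comp π := QuotientGroup.monoidHom_ext _ <| by
    ext b₀
    simpa [hεdef, hπ] using DFunLike.congr_fun hpβ b₀
  have hvsec : Function.LeftInverse ((QuotientGroup.mk' γ.range).comp p) v := fun x => by
    simpa [← hpv] using hu x
  choose h hh using fun x y => hεrange ▸ factorSet_mem_ker hvsec x y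
  refine ⟨h, fun x y => ?_, fun x => hε ?_, fun y => hε ?_,
    cocycle_of_injective hε hh (fun x => θ (u x)) fun x e => ?_⟩
  · rw [← MonoidHom.comp_apply γ π, ← hpε, MonoidHom.comp_apply, hh, map_factorSet, hpv]
    rfl
  · rw [hh, factorSet_one_right hv1, map_one]
  · rw [hh, factorSet_one_left hv1, map_one]
  · rw [← hpv]
    exact hθ (v x) e

/-- If a pre-prolongation (α,γ,θ) admits a covering
(α,γ)-prolongation E, then the obstruction Obs(α,γ,θ) vanishes in H³(Π₀,A):
one can choose a normalized lift h of the factor set f with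
θ_{u_x}(h(y,z)) · h(x,yz) = h(x,y) · h(xy,z), i.e. k ≡ 1. -/
theorem stmt14 {A₀ B₀ G₀ A B G : Type*} [Group A₀] [Group B₀] [Group G₀]
    [Group A] [Group B] [Group G]
    -- the pre-prolongation data
    (j₀ : A₀ →* B₀) (p₀ : B₀ →* G₀) (α : A₀ →* A) (γ : G₀ →* G)
    (hj₀ : Function.Injective j₀) (hp₀ : Function.Surjective p₀)
    (hex₀ : j₀.range = p₀.ker)
    (hα : Function.Surjective α) (hγ : Function.Injective γ)
    [hN : γ.range.Normal] [hNα : (Subgroup.map j₀ α.ker).Normal]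
    (hcent : j₀.range ≤ Subgroup.center B₀)
    (π : (B₀ ⧸ Subgroup.map j₀ α.ker) →* G₀)
    (hπ : ∀ b₀ : B₀, π (QuotientGroup.mk b₀) = p₀ b₀)
    (θ : G →* MulAut (B₀ ⧸ Subgroup.map j₀ α.ker))
    (hC1 : ∀ e e' : B₀ ⧸ Subgroup.map j₀ α.ker, θ (γ (π e)) e' = e * e' * e⁻¹)
    (hC2 : ∀ (g : G) (e : B₀ ⧸ Subgroup.map j₀ α.ker),
      γ (π (θ g e)) = g * γ (π e) * g⁻¹)
    -- the covering (α,γ)-prolongation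
    (j : A →* B) (p : B →* G) (β : B₀ →* B)
    (hj : Function.Injective j) (hp : Function.Surjective p)
    (hex : j.range = p.ker)
    (hβj : β.comp j₀ = j.comp α) (hpβ : p.comp β = γ.comp p₀)
    (ε : (B₀ ⧸ Subgroup.map j₀ α.ker) →* B)
    (hεdef : ∀ b₀ : B₀, ε (QuotientGroup.mk b₀) = β b₀)
    (hε : Function.Injective ε)
    (hεrange : ε.range = ((QuotientGroup.mk' γ.range).comp p).ker)
    -- E induces θ
    (hθ : ∀ (b : B) (e₀ : B₀ ⧸ Subgroup.map j₀ α.ker),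
      ε (θ (p b) e₀) = b * ε e₀ * b⁻¹)
    -- a normalized section u of σ : G → Π₀
    (u : (G ⧸ γ.range) → G)
    (hu : ∀ x, QuotientGroup.mk' γ.range (u x) = x) (hu1 : u 1 = 1) :
    ∃ h : (G ⧸ γ.range) → (G ⧸ γ.range) → (B₀ ⧸ Subgroup.map j₀ α.ker),
      (∀ x y, γ (π (h x y)) = u x * u y * (u (x * y))⁻¹) ∧
      (∀ x, h x 1 = 1) ∧ (∀ y, h 1 y = 1) ∧
      (∀ x y z, θ (u x) (h y z) * h x (y * z) = h x y * h (x * y) z) :=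
  stmt14_general j₀ p₀ α γ (hN := hN) (hNα := hNα) π hπ θ p β hp hpβ ε hεdef hε hεrange hθ u hu hu1
end

section
/- Let E : 0 → A → B → G → 0 be an (α,γ)-prolongation of E₀ inducing θ, with sections v_x ∈ B lifting u_x ∈ G (p(v_x) = u_x). Then the map β* : B → B_h = [E₀, φ, h, Π₀] defined by ε(e₀)·v_x ↦ (e₀, x) is a group isomorphism making E equivalent to the crossed product extension E_h, with β*∘β = β' (where β'(b₀) = (b₀·ker α, 1)). In particular, every (α,γ)-prolongation is equivalent to a crossed product extension. -/
/-!
Since `ε` identifies `E₀` with the kernel of `B → G ⧸ γ.range` and `v` is a set-theoretic section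
of that map, every `b : B` is uniquely `ε e₀ * v x`, which makes `β*` a bijection. Multiplying two
such normal forms and moving `v x` past `ε e₀'` (conjugation by `v x` is `θ (u x)` on `E₀`) and
combining `v x * v y = ε (h x y) * v (x * y)` gives exactly the crossed product law.
-/

/-- The crossed product multiplication on E₀ × P with φ(x) = θ(u x):
(e₀,x)·(e₀',y) = (e₀ · φ(x)(e₀') · h(x,y), xy). -/
def crossedProductMul {E₀ G P : Type*} [Group E₀] [Group G] [Mul P]
    (θ : G →* MulAut E₀) (u : P → G) (h : P → P → E₀) :
    E₀ × P → E₀ × P → E₀ × P :=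
  fun z w => (z.1 * θ (u z.2) w.1 * h z.2 w.2, z.2 * w.2)

section NormalForm

open Function

variable {E B Q : Type*} [Group E] [Group B] [Group Q] {ε : E →* B} {q : B →* Q} {v : Q → B}

variable (ε q v) in
/-- The coordinates `(e, x)` of `b = ε e * v x` in an extension `E → B → Q` with section `v`. -/
noncomputable def normalFormCoords (b : B) : E × Q :=
  (invFun ε (b * (v (q b))⁻¹), q b)

theorem normalFormCoords_mul_section (hε : Injective ε) (hrange : ε.range ≤ q.ker)
    (hv : ∀ x, q (v x) = x) (e : E) (x : Q) :
    normalFormCoords ε q v (ε e * v x) = (e, x) := by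
  have hq : q (ε e * v x) = x := by
    rw [map_mul, hrange ⟨e, rfl⟩, hv, one_mul]
  simp only [normalFormCoords, hq, mul_inv_cancel_right, leftInverse_invFun hε e]

theorem normalFormCoords_apply_of_section_one (hε : Injective ε) (hrange : ε.range ≤ q.ker)
    (hv : ∀ x, q (v x) = x) (hv1 : v 1 = 1) (e : E) :
    normalFormCoords ε q v (ε e) = (e, 1) := by
  simpa only [hv1, mul_one] using normalFormCoords_mul_section hε hrange hv e 1

theorem mul_section_normalFormCoords (hker : q.ker ≤ ε.range) (hv : ∀ x, q (v x) = x) (b : B) :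
    ε (normalFormCoords ε q v b).1 * v (normalFormCoords ε q v b).2 = b := by
  have hmem : b * (v (q b))⁻¹ ∈ ε.range :=
    hker (by rw [MonoidHom.mem_ker, map_mul, map_inv, hv, mul_inv_cancel])
  simp only [normalFormCoords, invFun_eq hmem, inv_mul_cancel_right]

theorem bijective_normalFormCoords (hε : Injective ε) (hrange : ε.range = q.ker)
    (hv : ∀ x, q (v x) = x) : Bijective (normalFormCoords ε q v) :=
  bijective_iff_has_inverse.mpr ⟨fun z => ε z.1 * v z.2,
    mul_section_normalFormCoords hrange.ge hv,
    fun z => normalFormCoords_mul_section hε hrange.le hv z.1 z.2⟩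

theorem section_mul_section {G : Type*} [Group G] {θ : G →* MulAut E} {u : Q → G}
    {h : Q → Q → E} (hθ : ∀ x e, ε (θ (u x) e) = v x * ε e * (v x)⁻¹)
    (hh : ∀ x y, ε (h x y) = v x * v y * (v (x * y))⁻¹) (e e' : E) (x y : Q) :
    ε e * v x * (ε e' * v y) = ε (e * θ (u x) e' * h x y) * v (x * y) := by
  rw [map_mul, map_mul, hθ, hh]
  group

theorem normalFormCoords_mul {G : Type*} [Group G] {θ : G →* MulAut E} {u : Q → G}
    {h : Q → Q → E} (hε : Injective ε) (hrange : ε.range = q.ker) (hv : ∀ x, q (v x) = x)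
    (hθ : ∀ x e, ε (θ (u x) e) = v x * ε e * (v x)⁻¹)
    (hh : ∀ x y, ε (h x y) = v x * v y * (v (x * y))⁻¹) (b b' : B) :
    normalFormCoords ε q v (b * b') =
      crossedProductMul θ u h (normalFormCoords ε q v b) (normalFormCoords ε q v b') := by
  conv_lhs => rw [← mul_section_normalFormCoords hrange.ge hv b,
    ← mul_section_normalFormCoords hrange.ge hv b', section_mul_section hθ hh]
  exact normalFormCoords_mul_section hε hrange.le hv _ _

end NormalForm

theorem stmt18_general {A₀ B₀ G₀ A B G : Type*} [Group A₀] [Group B₀] [Group G₀]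
    [Group A] [Group B] [Group G]
    (j₀ : A₀ →* B₀) (p₀ : B₀ →* G₀) (j : A →* B) (p : B →* G)
    (α : A₀ →* A) (β : B₀ →* B) (γ : G₀ →* G)
    (hα : Function.Surjective α)
    [hN : γ.range.Normal] [hNα : (Subgroup.map j₀ α.ker).Normal]
    (hβj : β.comp j₀ = j.comp α) (hpβ : p.comp β = γ.comp p₀)
    -- the maps i, π, ε of the induced diagram
    (i : A →* (B₀ ⧸ Subgroup.map j₀ α.ker))
    (hi : ∀ a₀ : A₀, i (α a₀) = QuotientGroup.mk (j₀ a₀))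
    (π : (B₀ ⧸ Subgroup.map j₀ α.ker) →* G₀)
    (hπ : ∀ b₀ : B₀, π (QuotientGroup.mk b₀) = p₀ b₀)
    (ε : (B₀ ⧸ Subgroup.map j₀ α.ker) →* B)
    (hεdef : ∀ b₀ : B₀, ε (QuotientGroup.mk b₀) = β b₀)
    (hε : Function.Injective ε)
    (hεrange : ε.range = ((QuotientGroup.mk' γ.range).comp p).ker)
    -- the induced θ
    (θ : G →* MulAut (B₀ ⧸ Subgroup.map j₀ α.ker))
    (hθ : ∀ (b : B) (e₀ : B₀ ⧸ Subgroup.map j₀ α.ker),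
      ε (θ (p b) e₀) = b * ε e₀ * b⁻¹)
    -- sections u of σ and v of p over u, and the induced lift h
    (u : (G ⧸ γ.range) → G)
    (hu : ∀ x, QuotientGroup.mk' γ.range (u x) = x)
    (v : (G ⧸ γ.range) → B)
    (hv : ∀ x, p (v x) = u x) (hv1 : v 1 = 1)
    (h : (G ⧸ γ.range) → (G ⧸ γ.range) → (B₀ ⧸ Subgroup.map j₀ α.ker))
    (hh : ∀ x y, ε (h x y) = v x * v y * (v (x * y))⁻¹) :
    ∃ βs : B → (B₀ ⧸ Subgroup.map j₀ α.ker) × (G ⧸ γ.range),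
      Function.Bijective βs ∧
      (∀ (e₀ : B₀ ⧸ Subgroup.map j₀ α.ker) (x : G ⧸ γ.range),
        βs (ε e₀ * v x) = (e₀, x)) ∧
      (∀ b b' : B, βs (b * b') = crossedProductMul θ u h (βs b) (βs b')) ∧
      (∀ a : A, βs (j a) = (i a, 1)) ∧
      (∀ b : B, γ (π (βs b).1) * u (βs b).2 = p b) ∧
      (∀ b₀ : B₀, βs (β b₀) = (QuotientGroup.mk b₀, 1)) := by
  set q := (QuotientGroup.mk' γ.range).comp p
  have hqv : ∀ x, q (v x) = x := fun x => by
    simp only [q, MonoidHom.comp_apply, hv, hu]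
  have hθv : ∀ x e, ε (θ (u x) e) = v x * ε e * (v x)⁻¹ := fun x e => by rw [← hv, hθ]
  have hεi : ∀ a, ε (i a) = j a := fun a => by
    obtain ⟨a₀, rfl⟩ := hα a
    rw [hi, hεdef]
    exact DFunLike.congr_fun hβj a₀
  have hpε : ∀ e, p (ε e) = γ (π e) := fun e => by
    induction e using QuotientGroup.induction_on with
    | H b₀ => rw [hεdef, hπ]; exact DFunLike.congr_fun hpβ b₀
  have hcoords_ε := normalFormCoords_apply_of_section_one hε hεrange.le hqv hv1
  refine ⟨normalFormCoords ε q v, bijective_normalFormCoords hε hεrange hqv,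
    normalFormCoords_mul_section hε hεrange.le hqv,
    normalFormCoords_mul hε hεrange hqv hθv hh, fun a => ?_, fun b => ?_, fun b₀ => ?_⟩
  · rw [← hεi, hcoords_ε]
  · conv_rhs => rw [← mul_section_normalFormCoords hεrange.ge hqv b]
    rw [map_mul, hpε, hv]
  · rw [← hεdef, hcoords_ε]

/-- Any (α,γ)-prolongation E inducing θ, with sections v_x lifting
u_x, is equivalent to the crossed product extension E_h = [E₀, φ, h, Π₀] via the
isomorphism β* : B → B_h, ε(e₀)·v_x ↦ (e₀, x), which satisfies β*∘j = j',
p'∘β* = p and β*∘β = β'. -/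
theorem stmt18 {A₀ B₀ G₀ A B G : Type*} [Group A₀] [Group B₀] [Group G₀]
    [Group A] [Group B] [Group G]
    (j₀ : A₀ →* B₀) (p₀ : B₀ →* G₀) (j : A →* B) (p : B →* G)
    (α : A₀ →* A) (β : B₀ →* B) (γ : G₀ →* G)
    (hj₀ : Function.Injective j₀) (hp₀ : Function.Surjective p₀)
    (hex₀ : j₀.range = p₀.ker)
    (hj : Function.Injective j) (hp : Function.Surjective p)
    (hex : j.range = p.ker)
    (hα : Function.Surjective α) (hγ : Function.Injective γ)
    [hN : γ.range.Normal] [hNα : (Subgroup.map j₀ α.ker).Normal]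
    (hβj : β.comp j₀ = j.comp α) (hpβ : p.comp β = γ.comp p₀)
    (hcent : j₀.range ≤ Subgroup.center B₀)
    -- the maps i, π, ε of the induced diagram
    (i : A →* (B₀ ⧸ Subgroup.map j₀ α.ker))
    (hi : ∀ a₀ : A₀, i (α a₀) = QuotientGroup.mk (j₀ a₀))
    (π : (B₀ ⧸ Subgroup.map j₀ α.ker) →* G₀)
    (hπ : ∀ b₀ : B₀, π (QuotientGroup.mk b₀) = p₀ b₀)
    (ε : (B₀ ⧸ Subgroup.map j₀ α.ker) →* B)
    (hεdef : ∀ b₀ : B₀, ε (QuotientGroup.mk b₀) = β b₀)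
    (hε : Function.Injective ε)
    (hεrange : ε.range = ((QuotientGroup.mk' γ.range).comp p).ker)
    -- the induced θ
    (θ : G →* MulAut (B₀ ⧸ Subgroup.map j₀ α.ker))
    (hθ : ∀ (b : B) (e₀ : B₀ ⧸ Subgroup.map j₀ α.ker),
      ε (θ (p b) e₀) = b * ε e₀ * b⁻¹)
    -- sections u of σ and v of p over u, and the induced lift h
    (u : (G ⧸ γ.range) → G)
    (hu : ∀ x, QuotientGroup.mk' γ.range (u x) = x) (hu1 : u 1 = 1)
    (v : (G ⧸ γ.range) → B)
    (hv : ∀ x, p (v x) = u x) (hv1 : v 1 = 1)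
    (h : (G ⧸ γ.range) → (G ⧸ γ.range) → (B₀ ⧸ Subgroup.map j₀ α.ker))
    (hh : ∀ x y, ε (h x y) = v x * v y * (v (x * y))⁻¹) :
    ∃ βs : B → (B₀ ⧸ Subgroup.map j₀ α.ker) × (G ⧸ γ.range),
      Function.Bijective βs ∧
      (∀ (e₀ : B₀ ⧸ Subgroup.map j₀ α.ker) (x : G ⧸ γ.range),
        βs (ε e₀ * v x) = (e₀, x)) ∧
      (∀ b b' : B, βs (b * b') = crossedProductMul θ u h (βs b) (βs b')) ∧
      (∀ a : A, βs (j a) = (i a, 1)) ∧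
      (∀ b : B, γ (π (βs b).1) * u (βs b).2 = p b) ∧
      (∀ b₀ : B₀, βs (β b₀) = (QuotientGroup.mk b₀, 1)) :=
  stmt18_general j₀ p₀ j p α β γ hα (hN := hN) (hNα := hNα) hβj hpβ i hi π hπ ε hεdef hε hεrange θ
    hθ u hu v hv hv1 h hh
end

section
/- If a central extension E₀ admits an (α,γ)-prolongation, then the set Ext_{(α,γ)}(G,A) of equivalence classes of (α,γ)-prolongations of E₀ is a torsor under H²(Π₀, A): the action ω(τ̄)(cls[E₀,φ,h,Π₀]) = cls[E₀,φ,h·τ,Π₀] is well-defined, and for any two classes of prolongations there is a unique τ̄ ∈ H²(Π₀,A) taking one to the other. -/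
/-!
A = ker d is central and stable under θ. Two prolongation data h, h' have the same image under
d, so h' = hσ with σ = h⁻¹h' A-valued; and for A-valued σ, hσ satisfies the cocycle identity
exactly when σ does, since the factors of σ can be moved past those of h, after which the
identity for h cancels. Likewise an equivalence c·h·c'⁻¹ with central c, c' is right
multiplication by c·c'⁻¹, so h and h' are equivalent exactly when h⁻¹h' is a coboundary.
-/

section SchreierTheory

variable {E₀ G : Type*} [Group E₀] [Group G]

/-- `h` is a normalized lift along `d` of the factor set of the section `u`
satisfying the 2-cocycle identity, i.e. the data of a crossed product
extension [E₀, φ, h, Π₀] which is an (α,γ)-prolongation. -/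
def IsProlongationDatum (d : E₀ →* G) (θ : G →* MulAut E₀) [d.range.Normal]
    (u : (G ⧸ d.range) → G) (h : (G ⧸ d.range) → (G ⧸ d.range) → E₀) : Prop :=
  (∀ x y, d (h x y) = u x * u y * (u (x * y))⁻¹) ∧
  (∀ x, h x 1 = 1) ∧ (∀ y, h 1 y = 1) ∧
  (∀ x y z, θ (u x) (h y z) * h x (y * z) = h x y * h (x * y) z)

/-- A normalized 2-cocycle of Π₀ with values in A = ker d (with Π₀-action via θ
through the section u). -/
def IsTwoCocycle (d : E₀ →* G) (θ : G →* MulAut E₀) [d.range.Normal]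
    (u : (G ⧸ d.range) → G) (τ : (G ⧸ d.range) → (G ⧸ d.range) → E₀) : Prop :=
  (∀ x y, τ x y ∈ d.ker) ∧ (∀ x, τ x 1 = 1) ∧ (∀ y, τ 1 y = 1) ∧
  (∀ x y z, θ (u x) (τ y z) * τ x (y * z) = τ x y * τ (x * y) z)

/-- A 2-coboundary of Π₀ with values in A = ker d. -/
def IsTwoCoboundary (d : E₀ →* G) (θ : G →* MulAut E₀) [d.range.Normal]
    (u : (G ⧸ d.range) → G) (τ : (G ⧸ d.range) → (G ⧸ d.range) → E₀) : Prop :=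
  ∃ t : (G ⧸ d.range) → E₀, (∀ x, t x ∈ d.ker) ∧ t 1 = 1 ∧
    ∀ x y, τ x y = t x * θ (u x) (t y) * (t (x * y))⁻¹

/-- Equivalence of the crossed product extensions [E₀, φ, h, Π₀] and
[E₀, φ, h', Π₀]: h and h' differ by a coboundary δt with values in A = ker d. -/
def EquivDatum (d : E₀ →* G) (θ : G →* MulAut E₀) [d.range.Normal]
    (u : (G ⧸ d.range) → G) (h h' : (G ⧸ d.range) → (G ⧸ d.range) → E₀) : Prop :=
  ∃ t : (G ⧸ d.range) → E₀, (∀ x, t x ∈ d.ker) ∧ t 1 = 1 ∧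
    ∀ x y, h' x y = t x * θ (u x) (t y) * h x y * (t (x * y))⁻¹

section Torsor

theorem mul_mul_mul_eq_iff_of_commute {M : Type*} [Group M] {a b p q a' b' p' q' : M}
    (hbp : Commute b p) (hbp' : Commute b' p') (h : a * p = a' * p') :
    a * b * (p * q) = a' * b' * (p' * q') ↔ b * q = b' * q' := by
  rw [hbp.mul_mul_mul_comm, hbp'.mul_mul_mul_comm, h, mul_right_inj]

def CocycleCondition {Q : Type*} [Mul Q] (θ : G →* MulAut E₀) (u : Q → G)
    (f : Q → Q → E₀) : Prop :=
  ∀ x y z, θ (u x) (f y z) * f x (y * z) = f x y * f (x * y) z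

variable {d : E₀ →* G} {θ : G →* MulAut E₀}

theorem commute_of_mem_ker (hcent : d.ker ≤ Subgroup.center E₀) {a : E₀} (ha : a ∈ d.ker)
    (b : E₀) : Commute a b :=
  (Subgroup.mem_center_iff.mp (hcent ha) b).symm

theorem map_mem_ker_of_map_conj (hC2 : ∀ (g : G) (e : E₀), d (θ g e) = g * d e * g⁻¹)
    (g : G) {a : E₀} (ha : a ∈ d.ker) : θ g a ∈ d.ker := by
  rw [MonoidHom.mem_ker, hC2, MonoidHom.mem_ker.mp ha, mul_one, mul_inv_cancel]

theorem cocycleCondition_mul_iff {Q : Type*} [Mul Q] {u : Q → G} {h σ : Q → Q → E₀}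
    (hcent : d.ker ≤ Subgroup.center E₀) (hθ : ∀ (g : G) {a : E₀}, a ∈ d.ker → θ g a ∈ d.ker)
    (hh : CocycleCondition θ u h) (hσ : ∀ x y, σ x y ∈ d.ker) :
    CocycleCondition θ u (fun x y => h x y * σ x y) ↔ CocycleCondition θ u σ := by
  refine forall₃_congr fun x y z => ?_
  rw [map_mul]
  exact mul_mul_mul_eq_iff_of_commute (commute_of_mem_ker hcent (hθ _ (hσ y z)) _)
    (commute_of_mem_ker hcent (hσ x y) _) (hh x y z)

variable [d.range.Normal] {u : (G ⧸ d.range) → G}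

theorem IsProlongationDatum.mul_isTwoCocycle {h τ : (G ⧸ d.range) → (G ⧸ d.range) → E₀}
    (hcent : d.ker ≤ Subgroup.center E₀) (hθ : ∀ (g : G) {a : E₀}, a ∈ d.ker → θ g a ∈ d.ker)
    (hh : IsProlongationDatum d θ u h) (hτ : IsTwoCocycle d θ u τ) :
    IsProlongationDatum d θ u (fun x y => h x y * τ x y) := by
  obtain ⟨hd, hr, hl, hco⟩ := hh
  obtain ⟨hτA, hτr, hτl, hτco⟩ := hτ
  refine ⟨fun x y => ?_, fun x => ?_, fun y => ?_,
    (cocycleCondition_mul_iff hcent hθ hco hτA).mpr hτco⟩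
  all_goals dsimp only
  · rw [map_mul, hd, MonoidHom.mem_ker.mp (hτA x y), mul_one]
  · rw [hr, hτr, mul_one]
  · rw [hl, hτl, mul_one]

theorem IsProlongationDatum.isTwoCocycle_inv_mul {h h' : (G ⧸ d.range) → (G ⧸ d.range) → E₀}
    (hcent : d.ker ≤ Subgroup.center E₀) (hθ : ∀ (g : G) {a : E₀}, a ∈ d.ker → θ g a ∈ d.ker)
    (hh : IsProlongationDatum d θ u h) (hh' : IsProlongationDatum d θ u h') :
    IsTwoCocycle d θ u (fun x y => (h x y)⁻¹ * h' x y) := by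
  obtain ⟨hd, hr, hl, hco⟩ := hh
  obtain ⟨hd', hr', hl', hco'⟩ := hh'
  have hA : ∀ x y, (h x y)⁻¹ * h' x y ∈ d.ker := fun x y => by
    rw [MonoidHom.mem_ker, map_mul, map_inv, hd, hd', inv_mul_cancel]
  have hco'' : CocycleCondition θ u (fun x y => h x y * ((h x y)⁻¹ * h' x y)) := by
    simp only [mul_inv_cancel_left]
    exact hco'
  refine ⟨hA, fun x => ?_, fun y => ?_, (cocycleCondition_mul_iff hcent hθ hco hA).mp hco''⟩
  all_goals dsimp only
  · rw [hr, hr', inv_one, mul_one]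
  · rw [hl, hl', inv_one, mul_one]

theorem equivDatum_iff_isTwoCoboundary {h h' : (G ⧸ d.range) → (G ⧸ d.range) → E₀}
    (hcent : d.ker ≤ Subgroup.center E₀) (hθ : ∀ (g : G) {a : E₀}, a ∈ d.ker → θ g a ∈ d.ker) :
    EquivDatum d θ u h h' ↔ IsTwoCoboundary d θ u (fun x y => (h x y)⁻¹ * h' x y) := by
  refine exists_congr fun t => and_congr_right fun ht => and_congr_right fun _ =>
    forall₂_congr fun x y => ?_
  have hc : Commute (t x * θ (u x) (t y)) (h x y) :=
    commute_of_mem_ker hcent (mul_mem (ht x) (hθ _ (ht y))) _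
  rw [hc.eq, mul_assoc (h x y), inv_mul_eq_iff_eq_mul]

theorem IsTwoCoboundary.inv {τ : (G ⧸ d.range) → (G ⧸ d.range) → E₀}
    (hcent : d.ker ≤ Subgroup.center E₀) (hθ : ∀ (g : G) {a : E₀}, a ∈ d.ker → θ g a ∈ d.ker)
    (hτ : IsTwoCoboundary d θ u τ) : IsTwoCoboundary d θ u (fun x y => (τ x y)⁻¹) := by
  obtain ⟨t, ht, ht1, hτt⟩ := hτ
  refine ⟨fun x => (t x)⁻¹, fun x => inv_mem (ht x), inv_eq_one.mpr ht1, fun x y => ?_⟩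
  dsimp only
  rw [hτt, map_inv, ← (commute_of_mem_ker hcent (ht x) _).mul_inv,
    ← (commute_of_mem_ker hcent (mul_mem (ht x) (hθ _ (ht y))) _).mul_inv]

theorem EquivDatum.refl (h : (G ⧸ d.range) → (G ⧸ d.range) → E₀) : EquivDatum d θ u h h :=
  ⟨fun _ => 1, fun _ => one_mem _, rfl, fun x y => by simp⟩

end Torsor

theorem stmt19_general (d : E₀ →* G) (θ : G →* MulAut E₀)
    (hC2 : ∀ (g : G) (e : E₀), d (θ g e) = g * d e * g⁻¹)
    (hcent : d.ker ≤ Subgroup.center E₀)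
    [hN : d.range.Normal]
    (u : (G ⧸ d.range) → G) :
    -- (i) the action of 2-cocycles on prolongation data is defined:
    (∀ h τ, IsProlongationDatum d θ u h → IsTwoCocycle d θ u τ →
      IsProlongationDatum d θ u (fun x y => h x y * τ x y)) ∧
    -- (ii) it is well-defined on classes: cohomologous cocycles give
    -- equivalent prolongations
    (∀ h τ τ', IsProlongationDatum d θ u h → IsTwoCocycle d θ u τ →
      IsTwoCocycle d θ u τ' →
      IsTwoCoboundary d θ u (fun x y => τ x y * (τ' x y)⁻¹) →
      EquivDatum d θ u (fun x y => h x y * τ x y) (fun x y => h x y * τ' x y)) ∧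
    -- (iii) simple transitivity: for any two prolongation data there is a
    -- 2-cocycle τ, unique up to coboundary, carrying one to the other
    (∀ h h', IsProlongationDatum d θ u h → IsProlongationDatum d θ u h' →
      ∃ τ, IsTwoCocycle d θ u τ ∧
        EquivDatum d θ u (fun x y => h x y * τ x y) h' ∧
        ∀ τ', IsTwoCocycle d θ u τ' →
          EquivDatum d θ u (fun x y => h x y * τ' x y) h' →
          IsTwoCoboundary d θ u (fun x y => τ x y * (τ' x y)⁻¹)) := by
  have hθ : ∀ (g : G) {a : E₀}, a ∈ d.ker → θ g a ∈ d.ker := map_mem_ker_of_map_conj hC2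
  refine ⟨fun h τ hh hτ => hh.mul_isTwoCocycle hcent hθ hτ, ?_, ?_⟩
  · intro h τ τ' _ _ hτ' hδ
    rw [equivDatum_iff_isTwoCoboundary hcent hθ]
    convert hδ.inv hcent hθ using 3 with x y
    rw [mul_inv_rev (τ x y), inv_inv, mul_inv_rev (h x y), mul_assoc, inv_mul_cancel_left]
    exact (commute_of_mem_ker hcent (hτ'.1 x y) _).eq.symm
  · intro h h' hh hh'
    refine ⟨_, hh.isTwoCocycle_inv_mul hcent hθ hh', ?_, fun τ' hτ' hequiv => ?_⟩
    · simp only [mul_inv_cancel_left]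
      exact EquivDatum.refl h'
    · rw [equivDatum_iff_isTwoCoboundary hcent hθ] at hequiv
      convert hequiv using 3 with x y
      rw [mul_inv_rev, mul_assoc (τ' x y)⁻¹]
      exact (commute_of_mem_ker hcent (inv_mem (hτ'.1 x y)) _).eq.symm

/-- Schreier theory for (α,γ)-prolongations: if E₀ admits an
(α,γ)-prolongation, then the set of equivalence classes of
(α,γ)-prolongations — each represented by a crossed product [E₀,φ,h,Π₀] — is a
torsor under H²(Π₀,A): the action cls h ↦ cls (h·τ) by a 2-cocycle τ is
well-defined (compatible with replacing τ by a cohomologous cocycle), and for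
any two prolongation data there is a 2-cocycle τ, unique up to a coboundary,
taking one class to the other. -/
theorem stmt19 (d : E₀ →* G) (θ : G →* MulAut E₀)
    (hC1 : ∀ e e' : E₀, θ (d e) e' = e * e' * e⁻¹)
    (hC2 : ∀ (g : G) (e : E₀), d (θ g e) = g * d e * g⁻¹)
    (hcent : d.ker ≤ Subgroup.center E₀)
    [hN : d.range.Normal]
    (u : (G ⧸ d.range) → G)
    (hu : ∀ x, QuotientGroup.mk' d.range (u x) = x) (hu1 : u 1 = 1)
    -- E₀ admits an (α,γ)-prolongation:
    (hexists : ∃ h, IsProlongationDatum d θ u h) :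
    -- (i) the action of 2-cocycles on prolongation data is defined:
    (∀ h τ, IsProlongationDatum d θ u h → IsTwoCocycle d θ u τ →
      IsProlongationDatum d θ u (fun x y => h x y * τ x y)) ∧
    -- (ii) it is well-defined on classes: cohomologous cocycles give
    -- equivalent prolongations
    (∀ h τ τ', IsProlongationDatum d θ u h → IsTwoCocycle d θ u τ →
      IsTwoCocycle d θ u τ' →
      IsTwoCoboundary d θ u (fun x y => τ x y * (τ' x y)⁻¹) →
      EquivDatum d θ u (fun x y => h x y * τ x y) (fun x y => h x y * τ' x y)) ∧
    -- (iii) simple transitivity: for any two prolongation data there is a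
    -- 2-cocycle τ, unique up to coboundary, carrying one to the other
    (∀ h h', IsProlongationDatum d θ u h → IsProlongationDatum d θ u h' →
      ∃ τ, IsTwoCocycle d θ u τ ∧
        EquivDatum d θ u (fun x y => h x y * τ x y) h' ∧
        ∀ τ', IsTwoCocycle d θ u τ' →
          EquivDatum d θ u (fun x y => h x y * τ' x y) h' →
          IsTwoCoboundary d θ u (fun x y => τ x y * (τ' x y)⁻¹)) :=
  stmt19_general d θ hC2 hcent (hN := hN) u

end SchreierTheory
end
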